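/- For every clopen subset L of X and every k ∈ S, the set {μ ∈ Meas_S(X) : μ(L) = k} is the topological closure in Meas_S(X) of the set {∫f : f ∈ X →₀ S, Σ_{x ∈ L} f(x) = k}. -/

import Mathlib

open TopologicalSpace

/-- An `S`-valued measure on a topological space `X`: a finitely additive function from
the Boolean algebra of clopen subsets of `X` to `S`. -/
def IsSMeasure (S : Type*) [Semiring S] (X : Type*) [TopologicalSpace X]
    (μ : Clopens X → S) : Prop :=
  μ ⊥ = 0 ∧ ∀ K L : Clopens X, K ⊓ L = ⊥ → μ (K ⊔ L) = μ K + μ L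

/-- The space `Meas_S(X)` of all `S`-valued measures on `X`, topologized as a subspace of
the product space `Clopens X → S` (with `S` carrying a topology, which below is assumed
to be the discrete one). -/
abbrev SMeas (S : Type*) [Semiring S] [TopologicalSpace S]
    (X : Type*) [TopologicalSpace X] : Type _ :=
  {μ : Clopens X → S // IsSMeasure S X μ}

open scoped Classical in
/-- The integral `∫ f` of a finitely supported function `f : X →₀ S`: the `S`-valued
measure sending a clopen `K` to `Σ_{x ∈ K} f x`. -/
noncomputable def sInt {S : Type*} [Semiring S] {X : Type*} [TopologicalSpace X]
    (f : X →₀ S) (K : Clopens X) : S :=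
  ∑ x ∈ f.support, if x ∈ K then f x else 0

/-! A basic neighbourhood of a measure `μ` for pointwise convergence constrains only the values
`μ K` for `K` in a finite set `F` of clopens. These generate a finite Boolean algebra whose atoms
are the cells `cell F s`; putting the mass `μ (cell F s)` at one point of each nonempty cell gives
an integral agreeing with `μ` on `F`, by finite additivity. Putting `L` into `F` keeps this
integral in `{μ L = k}`, a closed set since evaluation at `L` is continuous and `S` is discrete.
-/

theorem mem_closure_of_forall_finset_exists_eq {ι : Type*} {A : ι → Type*}
    [∀ i, TopologicalSpace (A i)] {T : Set (∀ i, A i)} {g : ∀ i, A i}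
    (h : ∀ I : Finset ι, ∃ a ∈ T, ∀ i ∈ I, a i = g i) : g ∈ closure T := by
  rw [mem_closure_iff]
  intro o ho hgo
  obtain ⟨I, u, hu, hsub⟩ := isOpen_pi_iff.1 ho g hgo
  obtain ⟨a, haT, hag⟩ := h I
  exact ⟨a, hsub fun i hi => hag i hi ▸ (hu i hi).2, haT⟩

section Integral

variable {S : Type*} [Semiring S] {X : Type*} [TopologicalSpace X]

open scoped Classical in
lemma sInt_eq_sum (f : X →₀ S) (K : Clopens X) :
    sInt f K = f.sum fun x s => if x ∈ K then s else 0 :=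
  rfl

open scoped Classical in
lemma sInt_single (x : X) (s : S) (K : Clopens X) :
    sInt (Finsupp.single x s) K = if x ∈ K then s else 0 := by
  rw [sInt_eq_sum]
  exact Finsupp.sum_single_index (ite_self 0)

lemma sInt_zero (K : Clopens X) : sInt (0 : X →₀ S) K = 0 := by
  rw [sInt_eq_sum, Finsupp.sum_zero_index]

lemma sInt_finset_sum {ι : Type*} (t : Finset ι) (g : ι → X →₀ S) (K : Clopens X) :
    sInt (∑ i ∈ t, g i) K = ∑ i ∈ t, sInt (g i) K := by
  classical
  simp only [sInt_eq_sum]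
  exact (Finsupp.sum_finsetSum_index (h := fun x s => if x ∈ K then s else 0)
    (fun _ => ite_self (0 : S)) fun _ _ _ => by split_ifs <;> simp).symm

lemma isSMeasure_sInt (f : X →₀ S) : IsSMeasure S X (sInt f) := by
  classical
  refine ⟨by simp [sInt_eq_sum, ← SetLike.mem_coe], fun K L hKL => ?_⟩
  simp only [sInt_eq_sum, ← Finsupp.sum_add]
  refine Finset.sum_congr rfl fun x _ => ?_
  have hx : ¬(x ∈ K ∧ x ∈ L) := fun hx => (hKL ▸ hx : x ∈ (⊥ : Clopens X))
  by_cases hK : x ∈ K <;> by_cases hL : x ∈ L <;> simp_all [← SetLike.mem_coe]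

end Integral

section Cells

variable {X : Type*} [TopologicalSpace X]

open scoped Classical in
def cell (F s : Finset (Clopens X)) : Clopens X :=
  ⟨⋂ K ∈ F, if K ∈ s then (K : Set X) else (K : Set X)ᶜ,
    isClopen_biInter_finset fun K _ => by
      split_ifs
      exacts [K.isClopen, K.isClopen.compl]⟩

open scoped Classical in
lemma mem_cell {F s : Finset (Clopens X)} {x : X} :
    x ∈ cell F s ↔ ∀ K ∈ F, (x ∈ K ↔ K ∈ s) := by
  change x ∈ ⋂ K ∈ F, _ ↔ _
  simp only [Set.mem_iInter]
  refine forall₂_congr fun K _ => ?_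
  by_cases hK : K ∈ s <;> simp [hK]

lemma pairwiseDisjoint_cell (F : Finset (Clopens X)) :
    (F.powerset : Set (Finset (Clopens X))).PairwiseDisjoint (cell F) := by
  intro s hs t ht hst
  rw [Function.onFun, ← Clopens.coe_disjoint, Set.disjoint_left]
  intro x hxs hxt
  refine hst (Finset.ext fun K => ?_)
  by_cases hK : K ∈ F
  · exact (mem_cell.1 hxs K hK).symm.trans (mem_cell.1 hxt K hK)
  · exact iff_of_false (fun h => hK (Finset.mem_powerset.1 hs h))
      fun h => hK (Finset.mem_powerset.1 ht h)

open scoped Classical in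
lemma finset_sup_cell {F : Finset (Clopens X)} {K : Clopens X} (hK : K ∈ F) :
    (F.powerset.filter (K ∈ ·)).sup (cell F) = K := by
  ext x
  simp only [Clopens.coe_finset_sup, Finset.mem_filter, Finset.mem_powerset, Set.mem_iUnion,
    SetLike.mem_coe, exists_prop]
  constructor
  · rintro ⟨s, ⟨-, hKs⟩, hx⟩
    exact (mem_cell.1 hx K hK).2 hKs
  · intro hx
    refine ⟨F.filter (x ∈ ·), ⟨Finset.filter_subset _ _, Finset.mem_filter.2 ⟨hK, hx⟩⟩, ?_⟩
    exact mem_cell.2 fun J hJ => by simp [hJ]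

end Cells

namespace IsSMeasure

variable {S : Type*} [Semiring S] {X : Type*} [TopologicalSpace X] {μ : Clopens X → S}

lemma map_finset_sup (h : IsSMeasure S X μ) {ι : Type*} (t : Finset ι) (A : ι → Clopens X)
    (hA : (t : Set ι).PairwiseDisjoint A) : μ (t.sup A) = ∑ i ∈ t, μ (A i) := by
  classical
  induction t using Finset.induction_on with
  | empty => exact h.1
  | insert a t ha ih =>
    rw [Finset.sup_insert, Finset.sum_insert ha,
      ← ih (hA.subset (Finset.coe_subset.2 (Finset.subset_insert a t)))]
    refine h.2 _ _ (disjoint_iff.1 (Finset.disjoint_sup_right.2 fun i hi => ?_))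
    exact hA (by simp) (by simp [hi]) fun hai => ha (hai ▸ hi)

open scoped Classical in
lemma eq_sum_cell (h : IsSMeasure S X μ) {F : Finset (Clopens X)} {K : Clopens X}
    (hK : K ∈ F) : μ K = ∑ s ∈ F.powerset, if K ∈ s then μ (cell F s) else 0 := by
  rw [← Finset.sum_filter, ← h.map_finset_sup _ _
    ((pairwiseDisjoint_cell F).subset (Finset.coe_subset.2 (Finset.filter_subset _ _))),
    finset_sup_cell hK]

lemma exists_sInt_eqOn (h : IsSMeasure S X μ) (F : Finset (Clopens X)) :
    ∃ f : X →₀ S, Set.EqOn (sInt f) μ F := by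
  classical
  refine ⟨∑ s ∈ F.powerset, if hs : (cell F s : Set X).Nonempty then
    Finsupp.single hs.some (μ (cell F s)) else 0, fun K hK => ?_⟩
  rw [sInt_finset_sum, h.eq_sum_cell hK]
  refine Finset.sum_congr rfl fun s _ => ?_
  by_cases hs : (cell F s : Set X).Nonempty
  · rw [dif_pos hs, sInt_single]
    exact if_congr (mem_cell.1 hs.some_mem K hK) rfl rfl
  · have hempty : cell F s = ⊥ := Clopens.ext (Set.not_nonempty_iff_eq_empty.1 hs)
    rw [dif_neg hs, sInt_zero, hempty, h.1, ite_self]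

end IsSMeasure

theorem closure_sInt_eq_general (S X : Type*) [CommSemiring S]
    [TopologicalSpace S] [DiscreteTopology S]
    [TopologicalSpace X]
    (L : Clopens X) (k : S) :
    closure {μ : SMeas S X | ∃ f : X →₀ S,
        (∀ K : Clopens X, μ.1 K = sInt f K) ∧ sInt f L = k} =
      {μ : SMeas S X | μ.1 L = k} := by
  refine subset_antisymm (closure_minimal (fun μ ⟨f, hf, hfL⟩ => (hf L).trans hfL) ?_) ?_
  · exact isClosed_eq ((continuous_apply L).comp continuous_subtype_val) continuous_const
  · classical
    intro μ hμ
    rw [closure_subtype]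
    refine mem_closure_of_forall_finset_exists_eq fun I => ?_
    obtain ⟨f, hf⟩ := μ.2.exists_sInt_eqOn (insert L I)
    refine ⟨sInt f, ⟨⟨sInt f, isSMeasure_sInt f⟩, ⟨f, fun _ => rfl, ?_⟩, rfl⟩, ?_⟩
    · exact (hf (Finset.mem_insert_self L I)).trans hμ
    · exact fun i hi => hf (Finset.mem_insert_of_mem hi)

/-- For every clopen subset `L` of `X` and every `k ∈ S`, the set
`{μ ∈ Meas_S(X) : μ L = k}` is the topological closure in `Meas_S(X)` of the set
`{∫ f : f ∈ X →₀ S, Σ_{x ∈ L} f x = k}`. -/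
theorem closure_sInt_eq (S X : Type*) [CommSemiring S] [Finite S]
    [TopologicalSpace S] [DiscreteTopology S]
    [TopologicalSpace X] [CompactSpace X] [T2Space X] [TotallyDisconnectedSpace X]
    (L : Clopens X) (k : S) :
    closure {μ : SMeas S X | ∃ f : X →₀ S,
        (∀ K : Clopens X, μ.1 K = sInt f K) ∧ sInt f L = k} =
      {μ : SMeas S X | μ.1 L = k} :=
  closure_sInt_eq_general S X L k
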